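/- (Isoperimetric-type inequality) Let m>0, φ(X)=|X|^{m-1}X, s∈(0,1), ρ>0, and let u be a measurable function on the cube K_{2ρ}⊂ℝ^n. Then for all real numbers k<l<q there is a constant C=C(n,s) such that (q−l)·(φ(l)−φ(k))·|{u>q}∩K_ρ|·|{u<k}∩K_ρ| ≤ C ρ^{n+2s} ∫_{K_ρ}(u−l)_+(x) (∫_{K_{2ρ}} (φ(u)−φ(l))_−(y)/|x−y|^{n+2s} dy) dx. -/

import Mathlib

open MeasureTheory Set Filter

noncomputable section

/-- Euclidean space ℝⁿ. -/
abbrev Rn (n : ℕ) : Type := EuclideanSpace ℝ (Fin n)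

/-- The nonlinearity φ(X) = |X|^{m-1} X. -/
def phi (m X : ℝ) : ℝ := |X| ^ (m - 1) * X

/-- Positive part. -/
def posP (a : ℝ) : ℝ := max a 0

/-- Open cube of radius ρ centered at x₀. -/
def cube {n : ℕ} (x₀ : Rn n) (ρ : ℝ) : Set (Rn n) := {x | ∀ i, |x i - x₀ i| < ρ}

/-- Space-time cylinder with vertex (x₀, t₀): K_ρ(x₀) × (t₀ - τ, t₀]. -/
def cyl {n : ℕ} (x₀ : Rn n) (t₀ ρ τ : ℝ) : Set (Rn n × ℝ) :=
  (cube x₀ ρ) ×ˢ Ioc (t₀ - τ) t₀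

/-- Nonlocal tail of u over K_r(x₀) × I. -/
def tailOf {n : ℕ} (m s : ℝ) (u : Rn n × ℝ → ℝ) (x₀ : Rn n) (r : ℝ) (I : Set ℝ) : ℝ :=
  (r ^ (2 * s) *
    essSup (fun t => ∫ y in (cube x₀ r)ᶜ, |u (y, t)| ^ m / ‖y - x₀‖ ^ ((n : ℝ) + 2 * s))
      (volume.restrict I)) ^ (1 / m)

/-- Measurable kernel with bounds λ|x-y|^{-n-2s} ≤ K(x,y;t) ≤ Λ|x-y|^{-n-2s}. -/
def KernelBounds (n : ℕ) (s lam Lam : ℝ) (Kk : Rn n → Rn n → ℝ → ℝ) : Prop :=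
  (Measurable fun p : (Rn n × Rn n) × ℝ => Kk p.1.1 p.1.2 p.2) ∧
  (∀ x y t, 0 ≤ Kk x y t) ∧
  ∀ (x y : Rn n) (t : ℝ), x ≠ y →
    lam / ‖x - y‖ ^ ((n : ℝ) + 2 * s) ≤ Kk x y t ∧
      Kk x y t ≤ Lam / ‖x - y‖ ^ ((n : ℝ) + 2 * s)

/-- The function-space memberships in the definition of local weak solutions on Ω × (ta, tb]:
φ(u) ∈ L²loc(W^{s,2}loc), the tail integrability, and the time-continuity memberships. -/
def SolSpaces (n : ℕ) (s m ta tb : ℝ) (Ω : Set (Rn n)) (u : Rn n × ℝ → ℝ) : Prop :=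
  Measurable u ∧
  (∀ Kc : Set (Rn n), IsCompact Kc → Kc ⊆ Ω →
    ∀ t₁ t₂ : ℝ, ta < t₁ → t₁ ≤ t₂ → t₂ ≤ tb →
      (∫⁻ z in Kc ×ˢ Ioc t₁ t₂, ENNReal.ofReal (phi m (u z) ^ 2)) < ⊤ ∧
      (∫⁻ t in Ioc t₁ t₂, ∫⁻ x in Kc, ∫⁻ y in Kc,
          ENNReal.ofReal ((phi m (u (x, t)) - phi m (u (y, t))) ^ 2
            / ‖x - y‖ ^ ((n : ℝ) + 2 * s))) < ⊤) ∧
  essSup (fun t => ∫⁻ y, ENNReal.ofReal (|u (y, t)| ^ m / (1 + ‖y‖) ^ ((n : ℝ) + 2 * s)))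
      (volume.restrict (Ioc ta tb)) < ⊤ ∧
  (1 < m → ∀ Kc : Set (Rn n), IsCompact Kc → Kc ⊆ Ω →
    ContinuousOn (fun t => ∫ x in Kc, u (x, t) ^ 2) (Ioo ta tb) ∧
    ∀ t₁ t₂ : ℝ, ta < t₁ → t₁ ≤ t₂ → t₂ ≤ tb →
      (∫⁻ z in Kc ×ˢ Ioc t₁ t₂, ENNReal.ofReal (u z ^ 2)) < ⊤ ∧
      (∫⁻ t in Ioc t₁ t₂, ∫⁻ x in Kc, ∫⁻ y in Kc,
          ENNReal.ofReal ((u (x, t) - u (y, t)) ^ 2 / ‖x - y‖ ^ ((n : ℝ) + 2 * s))) < ⊤) ∧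
  (m < 1 → ∀ Kc : Set (Rn n), IsCompact Kc → Kc ⊆ Ω →
    ContinuousOn (fun t => ∫ x in Kc, |u (x, t)| ^ (m + 1)) (Ioo ta tb))

/-- The weak sub-solution inequality against smooth nonnegative compactly supported
test functions, on Ω × (ta, tb]. -/
def SubSolutionIneq (n : ℕ) (m ta tb : ℝ) (Ω : Set (Rn n))
    (Kk : Rn n → Rn n → ℝ → ℝ) (u : Rn n × ℝ → ℝ) : Prop :=
  ∀ Kc : Set (Rn n), IsCompact Kc → Kc ⊆ Ω →
  ∀ t₁ t₂ : ℝ, ta < t₁ → t₁ ≤ t₂ → t₂ ≤ tb →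
  ∀ ξ : Rn n × ℝ → ℝ, ContDiff ℝ (⊤ : ℕ∞) ξ → (∀ z, 0 ≤ ξ z) →
    (∀ t : ℝ, tsupport (fun x => ξ (x, t)) ⊆ Kc) →
    ((∫ x in Kc, u (x, t₂) * ξ (x, t₂)) - (∫ x in Kc, u (x, t₁) * ξ (x, t₁)))
        - (∫ t in Ioc t₁ t₂, ∫ x in Kc, u (x, t) * deriv (fun r => ξ (x, r)) t)
        + (∫ t in Ioc t₁ t₂, ∫ x in Kc, ∫ y,
            (phi m (u (x, t)) - phi m (u (y, t))) * (ξ (x, t) - ξ (y, t)) * Kk x y t)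
      ≤ 0

/-- The weak super-solution inequality. -/
def SupSolutionIneq (n : ℕ) (m ta tb : ℝ) (Ω : Set (Rn n))
    (Kk : Rn n → Rn n → ℝ → ℝ) (u : Rn n × ℝ → ℝ) : Prop :=
  ∀ Kc : Set (Rn n), IsCompact Kc → Kc ⊆ Ω →
  ∀ t₁ t₂ : ℝ, ta < t₁ → t₁ ≤ t₂ → t₂ ≤ tb →
  ∀ ξ : Rn n × ℝ → ℝ, ContDiff ℝ (⊤ : ℕ∞) ξ → (∀ z, 0 ≤ ξ z) →
    (∀ t : ℝ, tsupport (fun x => ξ (x, t)) ⊆ Kc) →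
    0 ≤ ((∫ x in Kc, u (x, t₂) * ξ (x, t₂)) - (∫ x in Kc, u (x, t₁) * ξ (x, t₁)))
        - (∫ t in Ioc t₁ t₂, ∫ x in Kc, u (x, t) * deriv (fun r => ξ (x, r)) t)
        + (∫ t in Ioc t₁ t₂, ∫ x in Kc, ∫ y,
            (phi m (u (x, t)) - phi m (u (y, t))) * (ξ (x, t) - ξ (y, t)) * Kk x y t)

/-- Local weak sub-solution of ∂ₜu - Lφ(u) = 0 on Ω × (ta, tb]. -/
def IsLocalWeakSubSolution (n : ℕ) (s m ta tb : ℝ) (Ω : Set (Rn n))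
    (Kk : Rn n → Rn n → ℝ → ℝ) (u : Rn n × ℝ → ℝ) : Prop :=
  SolSpaces n s m ta tb Ω u ∧ SubSolutionIneq n m ta tb Ω Kk u

/-- Local weak super-solution of ∂ₜu - Lφ(u) = 0 on Ω × (ta, tb]. -/
def IsLocalWeakSupSolution (n : ℕ) (s m ta tb : ℝ) (Ω : Set (Rn n))
    (Kk : Rn n → Rn n → ℝ → ℝ) (u : Rn n × ℝ → ℝ) : Prop :=
  SolSpaces n s m ta tb Ω u ∧ SupSolutionIneq n m ta tb Ω Kk u

/-- Local weak solution: both a sub- and a super-solution. -/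
def IsLocalWeakSolution (n : ℕ) (s m ta tb : ℝ) (Ω : Set (Rn n))
    (Kk : Rn n → Rn n → ℝ → ℝ) (u : Rn n × ℝ → ℝ) : Prop :=
  SolSpaces n s m ta tb Ω u ∧ SubSolutionIneq n m ta tb Ω Kk u ∧
    SupSolutionIneq n m ta tb Ω Kk u

/-- u is locally (essentially) bounded on Ω × (ta, tb]. -/
def LocallyBoundedOn {n : ℕ} (u : Rn n × ℝ → ℝ) (Ω : Set (Rn n)) (ta tb : ℝ) : Prop :=
  ∀ Kc : Set (Rn n), IsCompact Kc → Kc ⊆ Ω → ∀ t₁ : ℝ, ta < t₁ →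
    ∃ M : ℝ, ∀ᵐ z ∂(volume.restrict (Kc ×ˢ Ioc t₁ tb)), |u z| ≤ M

/-- Essential oscillation of u over a space-time set. -/
def essOsc {n : ℕ} (u : Rn n × ℝ → ℝ) (S : Set (Rn n × ℝ)) : ℝ :=
  essSup u (volume.restrict S) - essInf u (volume.restrict S)

/-- g₊(P,Q) = ∫_Q^P (φ(r) - φ(Q))₊ dr. -/
def gPlus (m P Q : ℝ) : ℝ := ∫ r in Q..P, posP (phi m r - phi m Q)

/-- g₋(P,Q) = -∫_Q^P (φ(r) - φ(Q))₋ dr. -/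
def gMinus (m P Q : ℝ) : ℝ := -∫ r in Q..P, posP (phi m Q - phi m r)

lemma phi_of_nonneg {m x : ℝ} (hm : 0 < m) (hx : 0 ≤ x) : phi m x = x ^ m := by
  rcases eq_or_lt_of_le hx with h | h
  · simp [phi, ← h, Real.zero_rpow hm.ne']
  · rw [phi, abs_of_pos h, ← Real.rpow_add_one h.ne', sub_add_cancel]

lemma phi_of_neg {m x : ℝ} (hx : x < 0) : phi m x = -(|x| ^ m) := by
  have habs : 0 < |x| := abs_pos.mpr hx.ne
  have h : |x| ^ m = |x| ^ (m - 1) * |x| := by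
    rw [← Real.rpow_add_one habs.ne', sub_add_cancel]
  rw [phi, h, abs_of_neg hx]; ring

lemma phi_mono {m : ℝ} (hm : 0 < m) : Monotone (phi m) := by
  intro a b hab
  rcases le_or_gt 0 a with ha | ha
  · rw [phi_of_nonneg hm ha, phi_of_nonneg hm (ha.trans hab)]
    exact Real.rpow_le_rpow ha hab hm.le
  rcases le_or_gt 0 b with hb | hb
  · rw [phi_of_neg ha, phi_of_nonneg hm hb]
    have h1 : 0 ≤ |a| ^ m := Real.rpow_nonneg (abs_nonneg a) m
    have h2 : 0 ≤ b ^ m := Real.rpow_nonneg hb m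
    linarith
  · rw [phi_of_neg ha, phi_of_neg hb]
    have : |b| ≤ |a| := by
      rw [abs_of_neg ha, abs_of_neg hb]; linarith
    have := Real.rpow_le_rpow (abs_nonneg b) this hm.le
    linarith

lemma measurableSet_cube {n : ℕ} (x₀ : Rn n) (ρ : ℝ) : MeasurableSet (cube x₀ ρ) := by
  have h : cube x₀ ρ = ⋂ i, {x : Rn n | |x i - x₀ i| < ρ} := by
    ext x; simp [cube]
  rw [h]
  refine MeasurableSet.iInter fun i => ?_
  have hmeas : Measurable fun x : Rn n => |x i - x₀ i| :=
    Continuous.measurable (by fun_prop)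
  exact measurableSet_lt hmeas measurable_const

lemma norm_sub_le_of_cube {n : ℕ} {x₀ x y : Rn n} {ρ : ℝ} (hρ : 0 ≤ ρ)
    (hx : x ∈ cube x₀ ρ) (hy : y ∈ cube x₀ ρ) :
    ‖x - y‖ ≤ 2 * Real.sqrt n * ρ := by
  have hsum : (∑ i, ‖(x - y) i‖ ^ 2) ≤ (n : ℝ) * (2 * ρ) ^ 2 := by
    have hbd : ∀ i ∈ Finset.univ, ‖(x - y) i‖ ^ 2 ≤ (2 * ρ) ^ 2 := by
      intro i _
      have h1 : (x - y) i = x i - y i := rfl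
      have h2 : |x i - y i| ≤ 2 * ρ := by
        have := hx i
        have := hy i
        have h3 : x i - y i = (x i - x₀ i) + (x₀ i - y i) := by ring
        calc |x i - y i| ≤ |x i - x₀ i| + |x₀ i - y i| := by
              rw [h3]; exact abs_add_le _ _
          _ ≤ 2 * ρ := by
              have h4 : |x₀ i - y i| = |y i - x₀ i| := abs_sub_comm _ _
              rw [h4]; linarith [hx i, hy i]
      rw [h1, Real.norm_eq_abs]
      calc |x i - y i| ^ 2 = |x i - y i| ^ 2 := rfl
        _ ≤ (2 * ρ) ^ 2 := by
            apply pow_le_pow_left₀ (abs_nonneg _) h2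
    calc (∑ i, ‖(x - y) i‖ ^ 2) ≤ ∑ _i : Fin n, (2 * ρ) ^ 2 :=
          Finset.sum_le_sum hbd
      _ = (n : ℝ) * (2 * ρ) ^ 2 := by simp [mul_comm]
  rw [EuclideanSpace.norm_eq]
  have : Real.sqrt (∑ i, ‖(x - y) i‖ ^ 2) ≤ Real.sqrt ((n : ℝ) * (2 * ρ) ^ 2) :=
    Real.sqrt_le_sqrt hsum
  refine this.trans (le_of_eq ?_)
  rw [Real.sqrt_mul (Nat.cast_nonneg n), Real.sqrt_sq (by positivity)]
  ring

/-- Isoperimetric-type inequality: for a measurable u on K_{2ρ} and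
levels k < l < q, (q-l)(φ(l)-φ(k))|{u>q}∩K_ρ||{u<k}∩K_ρ| ≤
C ρ^{n+2s} ∫_{K_ρ}(u-l)₊(x) ∫_{K_{2ρ}} (φ(u)-φ(l))₋(y)/|x-y|^{n+2s} dy dx, C = C(n,s). -/
theorem isoperimetric_inequality
    (n : ℕ) (hn : 2 ≤ n) (s : ℝ) (hs : s ∈ Ioo (0 : ℝ) 1) :
    ∃ C > (0 : ℝ),
      ∀ (m : ℝ), 0 < m →
      ∀ (x₀ : Rn n) (ρ : ℝ), 0 < ρ →
      ∀ u : Rn n → ℝ, Measurable u →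
      ∀ k l q : ℝ, k < l → l < q →
        ENNReal.ofReal ((q - l) * (phi m l - phi m k)) *
            volume ({x | q < u x} ∩ cube x₀ ρ) * volume ({x | u x < k} ∩ cube x₀ ρ)
          ≤ ENNReal.ofReal (C * ρ ^ ((n : ℝ) + 2 * s)) *
            ∫⁻ x in cube x₀ ρ,
              ENNReal.ofReal (posP (u x - l)) *
                ∫⁻ y in cube x₀ (2 * ρ),
                  ENNReal.ofReal (posP (phi m l - phi m (u y)) / ‖x - y‖ ^ ((n : ℝ) + 2 * s)) := by
  obtain ⟨hs0, hs1⟩ := hs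
  have hn0 : (0 : ℝ) < n := by
    have : (2 : ℝ) ≤ n := by exact_mod_cast hn
    linarith
  set N : ℝ := (n : ℝ) + 2 * s with hNdef
  have hNpos : 0 < N := by positivity
  have hsqn : 0 < Real.sqrt n := Real.sqrt_pos.mpr hn0
  refine ⟨(2 * Real.sqrt n) ^ N, Real.rpow_pos_of_pos (by positivity) N, ?_⟩
  intro m hm x₀ ρ hρ u hu k l q hkl hlq
  set A := {x | q < u x} ∩ cube x₀ ρ with hAdef
  set B := {x | u x < k} ∩ cube x₀ ρ with hBdef
  set D : ℝ := 2 * Real.sqrt n * ρ with hDdef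
  have hD : 0 < D := by positivity
  have hDN : 0 < D ^ N := Real.rpow_pos_of_pos hD N
  have hphikl : phi m k ≤ phi m l := phi_mono hm hkl.le
  set c₀ : ℝ := (phi m l - phi m k) / D ^ N with hc0def
  have hc0 : 0 ≤ c₀ := div_nonneg (by linarith) hDN.le
  have hBmeas : MeasurableSet B :=
    (measurableSet_lt hu measurable_const).inter (measurableSet_cube x₀ ρ)
  have hAmeas : MeasurableSet A :=
    (measurableSet_lt measurable_const hu).inter (measurableSet_cube x₀ ρ)
  -- pointwise kernel lower bound
  have hpt : ∀ x ∈ A, ∀ y ∈ B,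
      c₀ ≤ posP (phi m l - phi m (u y)) / ‖x - y‖ ^ N := by
    intro x hx y hy
    have hqx : q < u x := hx.1
    have hyk : u y < k := hy.1
    have hne : x ≠ y := by
      intro h; rw [h] at hqx; linarith
    have hxy0 : 0 < ‖x - y‖ := by
      rw [norm_sub_pos_iff]; exact hne
    have hxyD : ‖x - y‖ ≤ D := norm_sub_le_of_cube hρ.le hx.2 hy.2
    have hxyN : ‖x - y‖ ^ N ≤ D ^ N :=
      Real.rpow_le_rpow (norm_nonneg _) hxyD hNpos.le
    have hxyNpos : 0 < ‖x - y‖ ^ N := Real.rpow_pos_of_pos hxy0 N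
    have hnum : phi m l - phi m k ≤ posP (phi m l - phi m (u y)) :=
      le_max_of_le_left (by linarith [phi_mono hm hyk.le])
    exact div_le_div₀ (le_max_right _ _) hnum hxyNpos hxyN
  -- main integral lower bound
  have key : ENNReal.ofReal (q - l) * ENNReal.ofReal c₀ * volume A * volume B ≤
      ∫⁻ x in cube x₀ ρ,
        ENNReal.ofReal (posP (u x - l)) *
          ∫⁻ y in cube x₀ (2 * ρ),
            ENNReal.ofReal (posP (phi m l - phi m (u y)) / ‖x - y‖ ^ N) := by
    have h1 : ∀ x ∈ A,
        ENNReal.ofReal (q - l) * (ENNReal.ofReal c₀ * volume B) ≤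
          ENNReal.ofReal (posP (u x - l)) *
            ∫⁻ y in cube x₀ (2 * ρ),
              ENNReal.ofReal (posP (phi m l - phi m (u y)) / ‖x - y‖ ^ N) := by
      intro x hx
      have hql : ENNReal.ofReal (q - l) ≤ ENNReal.ofReal (posP (u x - l)) :=
        ENNReal.ofReal_le_ofReal (le_max_of_le_left (by have h := hx.1; simp only [Set.mem_setOf_eq] at h; linarith))
      have hinner : ENNReal.ofReal c₀ * volume B ≤
          ∫⁻ y in cube x₀ (2 * ρ),
            ENNReal.ofReal (posP (phi m l - phi m (u y)) / ‖x - y‖ ^ N) := by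
        calc ENNReal.ofReal c₀ * volume B
            = ∫⁻ _y in B, ENNReal.ofReal c₀ := by
              rw [setLIntegral_const]
          _ ≤ ∫⁻ y in B,
              ENNReal.ofReal (posP (phi m l - phi m (u y)) / ‖x - y‖ ^ N) := by
              refine setLIntegral_mono' hBmeas fun y hy => ?_
              exact ENNReal.ofReal_le_ofReal (hpt x hx y hy)
          _ ≤ ∫⁻ y in cube x₀ (2 * ρ),
              ENNReal.ofReal (posP (phi m l - phi m (u y)) / ‖x - y‖ ^ N) := by
              refine lintegral_mono_set ?_
              intro y hy i
              have := hy.2 i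
              linarith
      exact mul_le_mul' hql hinner
    calc ENNReal.ofReal (q - l) * ENNReal.ofReal c₀ * volume A * volume B
        = ∫⁻ _x in A, ENNReal.ofReal (q - l) * (ENNReal.ofReal c₀ * volume B) := by
          rw [setLIntegral_const]; ring
      _ ≤ ∫⁻ x in A,
            ENNReal.ofReal (posP (u x - l)) *
              ∫⁻ y in cube x₀ (2 * ρ),
                ENNReal.ofReal (posP (phi m l - phi m (u y)) / ‖x - y‖ ^ N) :=
          setLIntegral_mono' hAmeas h1
      _ ≤ _ := lintegral_mono_set inter_subset_right
  -- assemble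
  have hCc : ENNReal.ofReal ((2 * Real.sqrt n) ^ N * ρ ^ N) * ENNReal.ofReal c₀ =
      ENNReal.ofReal (phi m l - phi m k) := by
    rw [← ENNReal.ofReal_mul (by positivity)]
    congr 1
    rw [hc0def, ← Real.mul_rpow (by positivity) hρ.le]
    exact mul_div_cancel₀ _ hDN.ne'
  calc ENNReal.ofReal ((q - l) * (phi m l - phi m k)) * volume A * volume B
      = ENNReal.ofReal ((2 * Real.sqrt n) ^ N * ρ ^ N) *
          (ENNReal.ofReal (q - l) * ENNReal.ofReal c₀ * volume A * volume B) := by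
        rw [ENNReal.ofReal_mul (by linarith)]
        rw [show ENNReal.ofReal ((2 * Real.sqrt n) ^ N * ρ ^ N) *
            (ENNReal.ofReal (q - l) * ENNReal.ofReal c₀ * volume A * volume B) =
            ENNReal.ofReal (q - l) *
              (ENNReal.ofReal ((2 * Real.sqrt n) ^ N * ρ ^ N) * ENNReal.ofReal c₀) *
              volume A * volume B by ring, hCc]
    _ ≤ ENNReal.ofReal ((2 * Real.sqrt n) ^ N * ρ ^ N) *
          ∫⁻ x in cube x₀ ρ,
            ENNReal.ofReal (posP (u x - l)) *
              ∫⁻ y in cube x₀ (2 * ρ),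
                ENNReal.ofReal (posP (phi m l - phi m (u y)) / ‖x - y‖ ^ N) :=
        mul_le_mul_right key _
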